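/- arXiv:1502.04924 — 3 statements merged into one kernel-verified Lean document; each statement's English description precedes it below -/
import Mathlib

section
/- Let R be a commutative ring and a a positive integer invertible in R. For a formal Laurent series f ∈ R((X)) (i.e. f = Σ_{n ≥ −N} c_n X^n), let σ_a(f) denote the Laurent series f((1+X)^a − 1), which is well defined since (1+X)^a − 1 = a·X·u(X) with u(X) ∈ R[[X]] of constant term 1 a unit of R[[X]]. Then Res_{X=0}( σ_a(f) / (1+X) ) = a^{−1} · Res_{X=0}( f / (1+X) ), where Res_{X=0} denotes the coefficient of X^{−1}. -/
open PowerSeries Finset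

/-- Composition `f(g)` of formal power series (valid when `g` has zero constant
coefficient). -/
noncomputable def pcomp {R : Type*} [CommRing R] (f g : PowerSeries R) : PowerSeries R :=
  PowerSeries.mk fun m => ∑ n ∈ Finset.range (m + 1),
    (PowerSeries.coeff (R := R) n f) * PowerSeries.coeff (R := R) m (g ^ n)

/-- The inverse `(1+X)⁻¹` in `R⟦X⟧` (constant coefficient of `1+X` is the unit `1`). -/
noncomputable def oneAddXInv (R : Type*) [CommRing R] : PowerSeries R :=
  PowerSeries.invOfUnit (1 + PowerSeries.X) 1

/-- The power series `w` with `(1+X)^a - 1 = X·w`; its constant coefficient is `a`. -/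
noncomputable def wSeries (R : Type*) [CommRing R] (a : ℕ) : PowerSeries R :=
  PowerSeries.mk fun n => PowerSeries.coeff (R := R) (n + 1) ((1 + PowerSeries.X) ^ a - 1)

/-- The inverse `((1+X)^a - 1)⁻¹ = X⁻¹ · w⁻¹` in the Laurent series field `R((X))`,
when `a` is invertible in `R` (so that `w` is a unit of `R⟦X⟧`). -/
noncomputable def subInv {R : Type*} [CommRing R] (a : ℕ) (hu : IsUnit ((a : ℕ) : R)) :
    LaurentSeries R :=
  (HahnSeries.single (-1 : ℤ) (1 : R)) *
    HahnSeries.ofPowerSeries ℤ R (PowerSeries.invOfUnit (wSeries R a) hu.unit)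

/-- The Laurent series `f = X^{-N}·g` (every Laurent series with finite principal
part is of this form). -/
noncomputable def laurentOf {R : Type*} [CommRing R] (N : ℕ) (g : PowerSeries R) :
    LaurentSeries R :=
  (HahnSeries.single (-(N : ℤ)) (1 : R)) * HahnSeries.ofPowerSeries ℤ R g

/-- `σ_a(f) = σ_a(g) · ((1+X)^a - 1)^{-N}` for `f = X^{-N}·g`. -/
noncomputable def sigmaLaurent {R : Type*} [CommRing R] (a : ℕ) (hu : IsUnit ((a : ℕ) : R))
    (N : ℕ) (g : PowerSeries R) : LaurentSeries R :=
  HahnSeries.ofPowerSeries ℤ R (pcomp g ((1 + PowerSeries.X) ^ a - 1)) * (subInv a hu) ^ N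

/-! Write `u = (1+X)^a - 1 = X·w` and `v = w⁻¹`, so that `u⁻¹ = X⁻¹·v`. Since
`a·(1+u)/(1+X) = a·(1+X)^{a-1} = u'`, multiplying by `u^{-(j+1)}` and taking residues gives
`a·Res(u^{-(j+1)}/(1+X)) = Res(u'·u^{-(j+1)}) - a·Res(u^{-j}/(1+X))`.
Here `Res(u'·u^{-(j+1)}) = δ_{j,0}`: for `j ≥ 1`, `j·u'·u^{-(j+1)}` is the derivative of
`-u^{-j}`, and derivatives have no residue. Cancelling the factor `j` needs torsion-freeness, so
this is proved over `ℤ[1/a]` and transported to `R`. Hence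
`a·Res(u^{-(j+1)}/(1+X)) = (-1)^j = Res(X^{-(j+1)}/(1+X))`, and the theorem follows by expanding
`σ_a(f) = g(u)·u^{-N}` in powers of `u`, of which only `u^k` with `k < N` contribute to the
residue. -/

section

variable {R S : Type*} [CommRing R] [CommRing S]

theorem one_add_X_mul_oneAddXInv : (1 + X) * oneAddXInv R = 1 :=
  mul_invOfUnit _ _ (by simp)

theorem coeff_oneAddXInv (n : ℕ) : coeff n (oneAddXInv R) = (-1) ^ n := by
  induction n with
  | zero => simp [oneAddXInv, coeff_zero_eq_constantCoeff]
  | succ n ih =>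
    have h := congrArg (coeff (n + 1)) (one_add_X_mul_oneAddXInv (R := R))
    rw [add_mul, one_mul, map_add, coeff_succ_X_mul, ih, coeff_one, if_neg n.succ_ne_zero] at h
    linear_combination h

theorem X_mul_wSeries (a : ℕ) : X * wSeries R a = (1 + X) ^ a - 1 := by
  ext n
  cases n with
  | zero => simp [coeff_zero_eq_constantCoeff]
  | succ n => simp [coeff_succ_X_mul, wSeries]

theorem constantCoeff_wSeries (a : ℕ) : constantCoeff (wSeries R a) = a := by
  have h : (1 + X : R⟦X⟧) ^ a = (((1 + Polynomial.X) ^ a : Polynomial R) : R⟦X⟧) := by simp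
  rw [← coeff_zero_eq_constantCoeff_apply, wSeries, coeff_mk, zero_add, map_sub, coeff_one,
    if_neg one_ne_zero, sub_zero, h, Polynomial.coeff_coe, Polynomial.coeff_one_add_X_pow,
    Nat.choose_one_right]

theorem one_add_X_mul_derivative_one_add_X_pow (a : ℕ) :
    (1 + X) * d⁄dX R ((1 + X) ^ a) = (a : R⟦X⟧) * (1 + X) ^ a := by
  induction a with
  | zero => simp
  | succ a ih =>
    rw [pow_succ, Derivation.leibniz, map_add, derivative_X, Derivation.map_one_eq_zero,
      smul_eq_mul, smul_eq_mul]
    push_cast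
    linear_combination (1 + X) * ih

theorem map_wSeries (f : R →+* S) (a : ℕ) : map f (wSeries R a) = wSeries S a := by
  ext n
  rw [coeff_map, wSeries, wSeries, coeff_mk, coeff_mk, ← coeff_map]
  simp

theorem map_oneAddXInv (f : R →+* S) : map f (oneAddXInv R) = oneAddXInv S :=
  left_inv_eq_right_inv (a := 1 + X)
    (by rw [mul_comm, ← map_X f, ← map_one (map f), ← map_add, ← map_mul,
      one_add_X_mul_oneAddXInv, map_one])
    one_add_X_mul_oneAddXInv

end

section

variable {R : Type*} [CommRing R] [IsAddTorsionFree R]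

/-- `Res(u'·u^{-(j+1)}) = δ_{j,0}` for `u = X·w`, where `v = w⁻¹`. -/
theorem coeff_derivative_X_mul_mul_pow_succ {w v : R⟦X⟧} (hwv : w * v = 1) (j : ℕ) :
    coeff j (d⁄dX R (X * w) * v ^ (j + 1)) = if j = 0 then 1 else 0 := by
  have hD : d⁄dX R (X * w) = w + X * d⁄dX R w := by
    rw [Derivation.leibniz, derivative_X, smul_eq_mul, smul_eq_mul]; ring
  cases j with
  | zero =>
    have h : d⁄dX R (X * w) * v ^ 1 = 1 + X * (d⁄dX R w * v) := by
      rw [hD]; linear_combination hwv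
    rw [zero_add, h, map_add, coeff_zero_X_mul, coeff_one, add_zero]
  | succ m =>
    have hdv : X * d⁄dX R v = v - d⁄dX R (X * w) * v ^ 2 := by
      have h := congrArg (d⁄dX R) hwv
      rw [Derivation.leibniz, Derivation.map_one_eq_zero, smul_eq_mul, smul_eq_mul] at h
      linear_combination X * v * h - X * d⁄dX R v * hwv + v * hwv + v ^ 2 * hD
    -- `(m+1)·u'·u^{-(m+2)} = -(u^{-(m+1)})'`, multiplied by `X^{m+2}`
    have key : X * d⁄dX R (v ^ (m + 1))
        = ((m + 1 : ℕ) : R⟦X⟧) * (v ^ (m + 1) - d⁄dX R (X * w) * v ^ (m + 2)) := by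
      rw [Derivation.leibniz_pow, Nat.add_sub_cancel, smul_eq_mul, nsmul_eq_mul]
      linear_combination ((m + 1 : ℕ) : R⟦X⟧) * v ^ m * hdv
    have h := congrArg (coeff (m + 1)) key
    rw [coeff_succ_X_mul, coeff_derivative, ← map_natCast C, coeff_C_mul, map_sub] at h
    rw [if_neg m.succ_ne_zero]
    apply nsmul_right_injective m.succ_ne_zero
    simp only [nsmul_eq_mul, smul_zero]
    push_cast at h ⊢
    linear_combination h

/-- `a·Res(u^{-(j+1)}/(1+X)) = (-1)^j` for `u = (1+X)^a - 1`. -/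
theorem natCast_mul_coeff_pow_succ_mul_oneAddXInv_of_isAddTorsionFree {a : ℕ} {v : R⟦X⟧}
    (hv : wSeries R a * v = 1) (j : ℕ) :
    (a : R) * coeff j (v ^ (j + 1) * oneAddXInv R) = (-1) ^ j := by
  set q := oneAddXInv R
  have hqu : (a : R⟦X⟧) * q * (1 + X * wSeries R a) = d⁄dX R (X * wSeries R a) := by
    rw [X_mul_wSeries, add_sub_cancel, map_sub, Derivation.map_one_eq_zero, sub_zero]
    linear_combination -q * one_add_X_mul_derivative_one_add_X_pow (R := R) a
      + d⁄dX R ((1 + X) ^ a) * one_add_X_mul_oneAddXInv (R := R)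
  have hrec (j : ℕ) : (a : R⟦X⟧) * (v ^ (j + 1) * q)
      = d⁄dX R (X * wSeries R a) * v ^ (j + 1) - X * ((a : R⟦X⟧) * (v ^ j * q)) := by
    linear_combination v ^ (j + 1) * hqu - X * a * q * v ^ j * hv
  have hC (j : ℕ) :
      (a : R) * coeff j (v ^ (j + 1) * q) = coeff j ((a : R⟦X⟧) * (v ^ (j + 1) * q)) := by
    rw [← map_natCast C, coeff_C_mul]
  induction j with
  | zero =>
    rw [hC, hrec, map_sub, coeff_zero_X_mul, coeff_derivative_X_mul_mul_pow_succ hv]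
    simp
  | succ j ih =>
    rw [hC, hrec, map_sub, coeff_succ_X_mul, ← hC, ih, coeff_derivative_X_mul_mul_pow_succ hv]
    simp [pow_succ]

end

section

variable {R : Type*} [CommRing R]

theorem natCast_mul_coeff_pow_succ_mul_oneAddXInv {a : ℕ} (ha : 0 < a) {v : R⟦X⟧}
    (hv : wSeries R a * v = 1) (j : ℕ) :
    (a : R) * coeff j (v ^ (j + 1) * oneAddXInv R) = (-1) ^ j := by
  let U := Localization.Away (a : ℤ)
  have hle : Submonoid.powers (a : ℤ) ≤ nonZeroDivisors ℤ :=
    powers_le_nonZeroDivisors_of_noZeroDivisors (by exact_mod_cast ha.ne')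
  have : IsDomain U := IsLocalization.isDomain_localization hle
  have : CharZero U := charZero_of_injective_algebraMap (IsLocalization.injective U hle)
  have haU : IsUnit (a : U) := by
    simpa using IsLocalization.Away.algebraMap_isUnit (S := U) (a : ℤ)
  have haR : IsUnit (a : R) := .of_mul_eq_one (constantCoeff v) <| by
    rw [← constantCoeff_wSeries, ← map_mul, hv, map_one]
  let φ : U →+* R := Localization.awayLift (Int.castRingHom R) (a : ℤ) (by simpa using haR)
  let vU := invOfUnit (wSeries U a) haU.unit
  have hvU : wSeries U a * vU = 1 :=
    mul_invOfUnit _ _ (by rw [constantCoeff_wSeries, IsUnit.unit_spec])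
  have hφv : map φ vU = v := left_inv_eq_right_inv (a := wSeries R a)
    (by rw [mul_comm, ← map_wSeries φ, ← map_mul, hvU, map_one]) hv
  have h := congrArg φ (natCast_mul_coeff_pow_succ_mul_oneAddXInv_of_isAddTorsionFree hvU j)
  rwa [map_mul, map_natCast, ← coeff_map, map_mul, map_pow, hφv, map_oneAddXInv, map_pow,
    map_neg, map_one] at h

theorem trunc_pcomp_X_mul (g w : R⟦X⟧) (n : ℕ) :
    trunc n (pcomp g (X * w)) = trunc n (∑ k ∈ range n, C (coeff k g) * (X * w) ^ k) := by
  ext m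
  rw [coeff_trunc, coeff_trunc]
  split_ifs with hm
  · simp only [pcomp, coeff_mk, map_sum, coeff_C_mul]
    refine sum_subset (range_subset_range.mpr hm) fun k _ hk => ?_
    rw [mul_pow, coeff_X_pow_mul', if_neg (by simp at hk; omega), mul_zero]
  · rfl

theorem coeff_pcomp_X_mul_mul (g w h : R⟦X⟧) (M : ℕ) :
    coeff M (pcomp g (X * w) * h)
      = ∑ k ∈ range (M + 1), coeff k g * coeff M ((X * w) ^ k * h) := by
  rw [← coeff_coe_trunc_of_lt M.lt_succ_self, ← trunc_trunc_mul, trunc_pcomp_X_mul,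
    trunc_trunc_mul, coeff_coe_trunc_of_lt M.lt_succ_self, sum_mul, map_sum]
  simp_rw [mul_assoc, coeff_C_mul]

theorem natCast_mul_coeff_pcomp_mul_pow_mul_oneAddXInv {a : ℕ} (ha : 0 < a) {v : R⟦X⟧}
    (hv : wSeries R a * v = 1) (g : R⟦X⟧) (M : ℕ) :
    (a : R) * coeff M (pcomp g ((1 + X) ^ a - 1) * v ^ (M + 1) * oneAddXInv R)
      = coeff M (g * oneAddXInv R) := by
  rw [← X_mul_wSeries, mul_assoc, coeff_pcomp_X_mul_mul, mul_sum, coeff_mul,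
    Finset.Nat.sum_antidiagonal_eq_sum_range_succ_mk]
  refine sum_congr rfl fun k hk => ?_
  obtain ⟨n, rfl⟩ : ∃ n, M = k + n :=
    Nat.exists_eq_add_of_le (by simpa [Nat.lt_succ_iff] using hk)
  have h : (X * wSeries R a) ^ k * (v ^ (k + n + 1) * oneAddXInv R)
      = X ^ k * (v ^ (n + 1) * oneAddXInv R) := by
    have hwv : wSeries R a ^ k * v ^ k = 1 := by rw [← mul_pow, hv, one_pow]
    rw [mul_pow, show k + n + 1 = k + (n + 1) by ring, pow_add]
    linear_combination X ^ k * v ^ (n + 1) * oneAddXInv R * hwv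
  rw [h, add_comm k n, coeff_X_pow_mul, Nat.add_sub_cancel, coeff_oneAddXInv,
    ← natCast_mul_coeff_pow_succ_mul_oneAddXInv ha hv n]
  ring

end

theorem sigmaLaurent_eq {R : Type*} [CommRing R] (a : ℕ) (hu : IsUnit ((a : ℕ) : R)) (N : ℕ)
    (g : R⟦X⟧) :
    sigmaLaurent a hu N g = HahnSeries.single (-(N : ℤ)) 1 * HahnSeries.ofPowerSeries ℤ R
      (pcomp g ((1 + X) ^ a - 1) * invOfUnit (wSeries R a) hu.unit ^ N) := by
  rw [sigmaLaurent, subInv, mul_pow, HahnSeries.single_pow, one_pow, map_mul, map_pow,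
    show N • (-1 : ℤ) = -(N : ℤ) by simp]
  ring

/-- Change-of-variables formula for the formal residue:
`Res_{X=0}(σ_a(f)/(1+X)) = a⁻¹ · Res_{X=0}(f/(1+X))` for any Laurent series
`f = X^{-N}·g` with finite principal part, where the residue is the coefficient
of `X^{-1}`. -/
theorem stmt6 {R : Type*} [CommRing R] (a : ℕ) (ha : 0 < a) (hu : IsUnit ((a : ℕ) : R))
    (N : ℕ) (g : PowerSeries R) :
    (sigmaLaurent a hu N g * HahnSeries.ofPowerSeries ℤ R (oneAddXInv R)).coeff (-1) =
      ((hu.unit⁻¹ : Rˣ) : R) *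
        (laurentOf N g * HahnSeries.ofPowerSeries ℤ R (oneAddXInv R)).coeff (-1) := by
  have hv : wSeries R a * invOfUnit (wSeries R a) hu.unit = 1 :=
    mul_invOfUnit _ _ (by rw [constantCoeff_wSeries, IsUnit.unit_spec])
  rw [sigmaLaurent_eq, laurentOf, mul_assoc, mul_assoc, ← map_mul, ← map_mul,
    HahnSeries.coeff_single_mul, HahnSeries.coeff_single_mul, one_mul, one_mul]
  cases N with
  | zero =>
    rw [Nat.cast_zero, neg_zero, sub_zero, PowerSeries.coeff_coe, PowerSeries.coeff_coe,
      if_pos (by norm_num), if_pos (by norm_num), mul_zero]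
  | succ M =>
    rw [show (-1 : ℤ) - -((M + 1 : ℕ) : ℤ) = M by push_cast; ring,
      LaurentSeries.coeff_coe_powerSeries, LaurentSeries.coeff_coe_powerSeries,
      ← natCast_mul_coeff_pcomp_mul_pow_mul_oneAddXInv ha hv g M, ← mul_assoc,
      hu.val_inv_mul, one_mul]
end

section
/- Let R be a commutative ring and D₁, D₂ be R-modules, each equipped with commuting R-linear endomorphisms φ_i, γ_i (i = 1,2). Put D := D₁ ⊗_R D₂ with φ := φ₁ ⊗ φ₂ and γ := γ₁ ⊗ γ₂. For an R-module E with commuting endomorphisms φ_E, γ_E, define H¹ of the complex C(E) : E → E ⊕ E → E (maps x ↦ ((γ_E−1)x, (φ_E−1)x) and (x,y) ↦ (φ_E−1)x − (γ_E−1)y) and H² := E / im((φ_E−1) ⊕ (1−γ_E)). Then the formula ((x₁,y₁), (x₂,y₂)) ↦ x₁ ⊗ γ₂(y₂) − y₁ ⊗ φ₂(x₂) maps pairs of 1-cocycles of C(D₁) × C(D₂) into D, is compatible with 1-coboundaries in each variable modulo 2-coboundaries of C(D), and hence induces a well-defined R-bilinear cup product pairing H¹(C(D₁)) × H¹(C(D₂))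 → H²(C(D)). -/
/-!
The cup product of a 1-coboundary `d z = ((γ - 1) z, (φ - 1) z)` with a 1-cocycle is a
2-coboundary of `D₁ ⊗ D₂` with explicit primitives: for a cocycle `(x, y)` of `D₂`,
`cup (d z) (x, y) = (φ - 1)(-(z ⊗ x)) + (1 - γ)(-(z ⊗ y))`, and for a cocycle `(x, y)` of `D₁`,
`cup (x, y) (d z) = (φ - 1)(x ⊗ γ₂ z) + (1 - γ)(y ⊗ φ₂ z)`, the latter because `φ₂` and `γ₂`
commute. As the formula is bilinear, `cup c₁ c₂ - cup c₁' c₂'` splits into two such terms.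
-/

open TensorProduct

namespace HerrComplex

variable {R E D1 D2 : Type*} [CommRing R] [AddCommGroup E] [Module R E]
  [AddCommGroup D1] [Module R D1] [AddCommGroup D2] [Module R D2]

def IsCocycle (φ γ : E →ₗ[R] E) (c : E × E) : Prop :=
  φ c.1 - c.1 = γ c.2 - c.2

def coboundaries2 (φ γ : E →ₗ[R] E) : Submodule R E :=
  LinearMap.range (φ - LinearMap.id) ⊔ LinearMap.range (LinearMap.id - γ)

theorem sub_id_add_id_sub_mem_coboundaries2 (φ γ : E →ₗ[R] E) (a b : E) :
    (φ - LinearMap.id : E →ₗ[R] E) a + (LinearMap.id - γ : E →ₗ[R] E) b ∈ coboundaries2 φ γ :=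
  Submodule.add_mem_sup (LinearMap.mem_range_self _ a) (LinearMap.mem_range_self _ b)

def cup (φ2 γ2 : D2 →ₗ[R] D2) (c1 : D1 × D1) (c2 : D2 × D2) : D1 ⊗[R] D2 :=
  c1.1 ⊗ₜ[R] γ2 c2.2 - c1.2 ⊗ₜ[R] φ2 c2.1

theorem cup_sub_cup (φ2 γ2 : D2 →ₗ[R] D2) (c1 c1' : D1 × D1) (c2 c2' : D2 × D2) :
    cup φ2 γ2 c1 c2 - cup φ2 γ2 c1' c2' =
      cup φ2 γ2 (c1 - c1') c2 + cup φ2 γ2 c1' (c2 - c2') := by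
  simp only [cup, Prod.fst_sub, Prod.snd_sub, map_sub, sub_tmul, tmul_sub]
  abel

theorem cup_coboundary_left_mem (φ1 γ1 : D1 →ₗ[R] D1) (φ2 γ2 : D2 →ₗ[R] D2) (z : D1)
    {c2 : D2 × D2} (hc2 : IsCocycle φ2 γ2 c2) :
    cup φ2 γ2 (γ1 z - z, φ1 z - z) c2 ∈ coboundaries2 (map φ1 φ2) (map γ1 γ2) := by
  have htmul : z ⊗ₜ[R] (φ2 c2.1 - c2.1) = z ⊗ₜ[R] (γ2 c2.2 - c2.2) := by rw [hc2]
  convert sub_id_add_id_sub_mem_coboundaries2 (map φ1 φ2) (map γ1 γ2)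
    (-(z ⊗ₜ[R] c2.1)) (-(z ⊗ₜ[R] c2.2)) using 1
  simp only [tmul_sub] at htmul
  simp only [cup, LinearMap.sub_apply, LinearMap.id_apply, map_neg, map_tmul, sub_tmul]
  linear_combination (norm := abel) htmul

theorem cup_coboundary_right_mem (φ1 γ1 : D1 →ₗ[R] D1) {φ2 γ2 : D2 →ₗ[R] D2}
    (hφγ : ∀ x, φ2 (γ2 x) = γ2 (φ2 x)) {c1 : D1 × D1} (hc1 : IsCocycle φ1 γ1 c1) (z : D2) :
    cup φ2 γ2 c1 (γ2 z - z, φ2 z - z) ∈ coboundaries2 (map φ1 φ2) (map γ1 γ2) := by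
  have htmul : (γ1 c1.2 - c1.2) ⊗ₜ[R] γ2 (φ2 z) = (φ1 c1.1 - c1.1) ⊗ₜ[R] γ2 (φ2 z) := by rw [hc1]
  convert sub_id_add_id_sub_mem_coboundaries2 (map φ1 φ2) (map γ1 γ2)
    (c1.1 ⊗ₜ[R] γ2 z) (c1.2 ⊗ₜ[R] φ2 z) using 1
  simp only [sub_tmul] at htmul
  simp only [cup, LinearMap.sub_apply, LinearMap.id_apply, map_sub, map_tmul, tmul_sub, hφγ]
  linear_combination (norm := abel) htmul

end HerrComplex

open HerrComplex in
theorem stmt8_general {R D1 D2 : Type*} [CommRing R]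
    [AddCommGroup D1] [Module R D1] [AddCommGroup D2] [Module R D2]
    (φ1 γ1 : D1 →ₗ[R] D1) (φ2 γ2 : D2 →ₗ[R] D2)
    (h2 : ∀ x, φ2 (γ2 x) = γ2 (φ2 x)) :
    let B2 : Submodule R (D1 ⊗[R] D2) :=
      LinearMap.range (TensorProduct.map φ1 φ2 - LinearMap.id) ⊔
        LinearMap.range (LinearMap.id - TensorProduct.map γ1 γ2)
    let cup : D1 × D1 → D2 × D2 → D1 ⊗[R] D2 :=
      fun c1 c2 => c1.1 ⊗ₜ[R] γ2 c2.2 - c1.2 ⊗ₜ[R] φ2 c2.1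
    (∀ (z : D1) (c2 : D2 × D2), φ2 c2.1 - c2.1 = γ2 c2.2 - c2.2 →
        cup (γ1 z - z, φ1 z - z) c2 ∈ B2) ∧
    (∀ c1 : D1 × D1, φ1 c1.1 - c1.1 = γ1 c1.2 - c1.2 → ∀ z : D2,
        cup c1 (γ2 z - z, φ2 z - z) ∈ B2) ∧
    (∀ c1 c1' : D1 × D1, ∀ c2 c2' : D2 × D2,
        φ1 c1.1 - c1.1 = γ1 c1.2 - c1.2 → φ1 c1'.1 - c1'.1 = γ1 c1'.2 - c1'.2 →
        φ2 c2.1 - c2.1 = γ2 c2.2 - c2.2 → φ2 c2'.1 - c2'.1 = γ2 c2'.2 - c2'.2 →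
        (∃ z : D1, c1 - c1' = (γ1 z - z, φ1 z - z)) →
        (∃ w : D2, c2 - c2' = (γ2 w - w, φ2 w - w)) →
        cup c1 c2 - cup c1' c2' ∈ B2) := by
  intro _ _
  refine ⟨fun z c2 hc2 => cup_coboundary_left_mem φ1 γ1 φ2 γ2 z hc2,
    fun c1 hc1 z => cup_coboundary_right_mem φ1 γ1 h2 hc1 z, ?_⟩
  rintro c1 c1' c2 c2' - hc1' hc2 - ⟨z, hz⟩ ⟨w, hw⟩
  change cup φ2 γ2 c1 c2 - cup φ2 γ2 c1' c2' ∈ coboundaries2 (map φ1 φ2) (map γ1 γ2)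
  rw [cup_sub_cup, hz, hw]
  exact add_mem (cup_coboundary_left_mem φ1 γ1 φ2 γ2 z hc2)
    (cup_coboundary_right_mem φ1 γ1 h2 hc1' w)

/-- The explicit cup product formula
`((x₁,y₁), (x₂,y₂)) ↦ x₁ ⊗ γ₂(y₂) − y₁ ⊗ φ₂(x₂)` on the Herr complexes:
it sends a coboundary paired with a cocycle (in either order) into the
2-coboundaries of `D = D₁ ⊗ D₂`, and hence induces a well-defined bilinear
pairing `H¹(C(D₁)) × H¹(C(D₂)) → H²(C(D))`. Here a 1-cocycle of `C(E)` is a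
pair `(x,y)` with `(φ_E−1)x = (γ_E−1)y`, a 1-coboundary is `((γ_E−1)z, (φ_E−1)z)`,
and `H² = E / im((φ_E−1) ⊕ (1−γ_E))`. -/
theorem stmt8 {R D1 D2 : Type*} [CommRing R]
    [AddCommGroup D1] [Module R D1] [AddCommGroup D2] [Module R D2]
    (φ1 γ1 : D1 →ₗ[R] D1) (φ2 γ2 : D2 →ₗ[R] D2)
    (h1 : ∀ x, φ1 (γ1 x) = γ1 (φ1 x)) (h2 : ∀ x, φ2 (γ2 x) = γ2 (φ2 x)) :
    let B2 : Submodule R (D1 ⊗[R] D2) :=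
      LinearMap.range (TensorProduct.map φ1 φ2 - LinearMap.id) ⊔
        LinearMap.range (LinearMap.id - TensorProduct.map γ1 γ2)
    let cup : D1 × D1 → D2 × D2 → D1 ⊗[R] D2 :=
      fun c1 c2 => c1.1 ⊗ₜ[R] γ2 c2.2 - c1.2 ⊗ₜ[R] φ2 c2.1
    (∀ (z : D1) (c2 : D2 × D2), φ2 c2.1 - c2.1 = γ2 c2.2 - c2.2 →
        cup (γ1 z - z, φ1 z - z) c2 ∈ B2) ∧
    (∀ c1 : D1 × D1, φ1 c1.1 - c1.1 = γ1 c1.2 - c1.2 → ∀ z : D2,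
        cup c1 (γ2 z - z, φ2 z - z) ∈ B2) ∧
    (∀ c1 c1' : D1 × D1, ∀ c2 c2' : D2 × D2,
        φ1 c1.1 - c1.1 = γ1 c1.2 - c1.2 → φ1 c1'.1 - c1'.1 = γ1 c1'.2 - c1'.2 →
        φ2 c2.1 - c2.1 = γ2 c2.2 - c2.2 → φ2 c2'.1 - c2'.1 = γ2 c2'.2 - c2'.2 →
        (∃ z : D1, c1 - c1' = (γ1 z - z, φ1 z - z)) →
        (∃ w : D2, c2 - c2' = (γ2 w - w, φ2 w - w)) →
        cup c1 c2 - cup c1' c2' ∈ B2) :=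
  stmt8_general φ1 γ1 φ2 γ2 h2
end

section
/- Let R be a commutative ring, G a group, Γ an abelian group, π : G → Γ a group homomorphism, and T an R[G]-module that is finite free as R-module with dual T^∨ := Hom_R(T, R) carrying the contragredient G-action. Let ι : R[Γ] → R[Γ] be the R-algebra involution with ι(γ) = γ^{−1}. For an R[Γ]-module M let M^ι be M with R[Γ]-action twisted through ι, and define Dfm(N) := N ⊗_R R[Γ] with g·(x⊗λ) = gx ⊗ π(g)^{−1}λ as before. Then the map Dfm(T^∨)^ι → Hom_{R[Γ]}(Dfm(T), R[Γ]), x ⊗ λ ↦ ( y ⊗ λ′ ↦ ι(λ)·λ′·x(y) ), is a well-defined isomorphism of R[Γ]-modules, and it is G-equivariant for the natural (contragredient) G-action on Hom_{R[Γ]}(Dfm(T), R[Γ]). -/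
/-!
For `T` finite projective over `R`, the map `λ ⊗ x ↦ (y ↦ x(y)·λ)` identifies `R[Γ] ⊗ T^∨` with
`Hom_R(T, R[Γ])`, and the base-change adjunction identifies the latter with
`Hom_{R[Γ]}(R[Γ] ⊗ T, R[Γ])`. Applying `ι` to the first factor beforehand makes the composite
`ι`-semilinear instead of linear. The `G`-equivariance is then the identity `ι(π(g)⁻¹) = π(g)`
together with the commutativity of `R[Γ]`.
-/
open TensorProduct

/-- The involution `ι` of the group algebra `R[Γ]` with `ι(γ) = γ⁻¹`. -/
noncomputable def iotaInv {R Γ : Type*} [CommRing R] [CommGroup Γ]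
    (lam : MonoidAlgebra R Γ) : MonoidAlgebra R Γ :=
  MonoidAlgebra.ofCoeff (Finsupp.equivMapDomain (Equiv.inv Γ) lam.coeff)

section TwistedDual

variable {R A M : Type*} [CommRing R] [CommRing A] [Algebra R A]
  [AddCommGroup M] [Module R M] [Module.Projective R M] [Module.Finite R M]

variable (M) in
noncomputable def twistedDualEquiv (σ : A ≃ₐ[R] A) :
    A ⊗[R] Module.Dual R M ≃ₗ[R] (A ⊗[R] M →ₗ[A] A) :=
  TensorProduct.congr σ.toLinearEquiv (LinearEquiv.refl R _) ≪≫ₗ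
    TensorProduct.comm R A (Module.Dual R M) ≪≫ₗ dualTensorHomEquiv R M A ≪≫ₗ
    (LinearMap.liftBaseChangeEquiv A).restrictScalars R

@[simp]
theorem twistedDualEquiv_tmul_apply_tmul (σ : A ≃ₐ[R] A) (lam mu : A)
    (x : Module.Dual R M) (y : M) :
    twistedDualEquiv M σ (lam ⊗ₜ x) (mu ⊗ₜ y) = x y • (σ lam * mu) := by
  simp [twistedDualEquiv, dualTensorHomEquiv, mul_comm mu]

theorem twistedDualEquiv_smul (σ : A ≃ₐ[R] A) (a : A) (m : A ⊗[R] Module.Dual R M) :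
    twistedDualEquiv M σ (a • m) = σ a • twistedDualEquiv M σ m := by
  induction m using TensorProduct.induction_on with
  | zero => simp
  | add m₁ m₂ h₁ h₂ => simp only [smul_add, map_add, h₁, h₂]
  | tmul lam x =>
    ext y
    simp [TensorProduct.smul_tmul']

end TwistedDual

section Involution

variable {R Γ : Type*} [CommRing R] [CommGroup Γ]

theorem iotaInv_eq_domCongr (lam : MonoidAlgebra R Γ) :
    iotaInv lam = MonoidAlgebra.domCongr R R (MulEquiv.inv Γ) lam := by
  ext γ
  simp [iotaInv, MonoidAlgebra.domCongr, Finsupp.equivMapDomain_eq_mapDomain]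
  rfl

theorem iotaInv_iotaInv (lam : MonoidAlgebra R Γ) : iotaInv (iotaInv lam) = lam := by
  ext γ
  simp [iotaInv]

theorem iotaInv_mul (a b : MonoidAlgebra R Γ) : iotaInv (a * b) = iotaInv a * iotaInv b := by
  simp only [iotaInv_eq_domCongr, map_mul]

theorem iotaInv_single (γ : Γ) (r : R) :
    iotaInv (MonoidAlgebra.single γ r) = MonoidAlgebra.single γ⁻¹ r := by
  simp [iotaInv, Finsupp.equivMapDomain_single]

end Involution

/-- The canonical isomorphism `Dfm(T^∨)^ι ≅ Hom_{R[Γ]}(Dfm(T), R[Γ])`: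
the map `x ⊗ λ ↦ (y ⊗ λ′ ↦ ι(λ)·λ′·x(y))` is a well-defined isomorphism of
`R[Γ]`-modules (from the `ι`-twisted module, i.e. `e(ι(a)·m) = a·e(m)`), and it
is `G`-equivariant for the contragredient `G`-actions. Here
`Dfm(N) = R[Γ] ⊗_R N` carries the `G`-action `g·(λ ⊗ x) = π(g)⁻¹λ ⊗ gx`, and
the contragredient action on the Hom is `(g·F)(m) = F(g⁻¹·m)`. -/
theorem stmt19 {R : Type*} [CommRing R] {G : Type*} [Group G] {Γ : Type*} [CommGroup Γ]
    (π : G →* Γ) {T : Type*} [AddCommGroup T] [Module R T]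
    [Module.Free R T] [Module.Finite R T]
    (ρ : G →* (T →ₗ[R] T)) :
    ∃ e : (MonoidAlgebra R Γ ⊗[R] Module.Dual R T) ≃+
        ((MonoidAlgebra R Γ ⊗[R] T) →ₗ[MonoidAlgebra R Γ] MonoidAlgebra R Γ),
      (∀ (lam mu : MonoidAlgebra R Γ) (x : Module.Dual R T) (y : T),
        e (lam ⊗ₜ[R] x) (mu ⊗ₜ[R] y) = x y • (iotaInv lam * mu)) ∧
      (∀ (a : MonoidAlgebra R Γ) (m : MonoidAlgebra R Γ ⊗[R] Module.Dual R T),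
        e (iotaInv a • m) = a • e m) ∧
      (∀ (g : G) (lam mu : MonoidAlgebra R Γ) (x : Module.Dual R T) (y : T),
        e ((MonoidAlgebra.single ((π g)⁻¹) (1 : R) * lam) ⊗ₜ[R] (x ∘ₗ ρ g⁻¹))
            (mu ⊗ₜ[R] y) =
          e (lam ⊗ₜ[R] x)
            ((MonoidAlgebra.single (π g) (1 : R) * mu) ⊗ₜ[R] ρ g⁻¹ y)) := by
  set ι := MonoidAlgebra.domCongr R R (MulEquiv.inv Γ)
  have hι : ∀ lam, ι lam = iotaInv lam := fun lam => (iotaInv_eq_domCongr lam).symm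
  refine ⟨(twistedDualEquiv T ι).toAddEquiv, fun lam mu x y => ?_, fun a m => ?_,
    fun g lam mu x y => ?_⟩
  · simp [hι]
  · simp [twistedDualEquiv_smul, hι, iotaInv_iotaInv]
  · simp [hι, iotaInv_mul, iotaInv_single]
    rw [mul_left_comm, mul_assoc]
end
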